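/- Let f, g, h, l be basis elements of 𝒯 (each of the form 1_w for a packed sequence w). If (f∘g)*(h∘l) ≠ 0, then (f∘g)*(h∘l) = (f*h)∘(g*l). -/

import Mathlib

/-!
Twisted descent algebras and the Solomon-Tits algebra (Patras-Schocker).

* A *packed sequence* is a finite sequence of pairwise disjoint nonempty
  finite subsets of ℕ.
* `TD k` is the free twisted descent algebra `𝒯`: the free `k`-module with
  basis `1_w`, `w` a packed sequence.
* `convL` is the convolution product `∗`, `compL` the composition product `∘`,
  `deltaL` the coproduct `δ`.
* `TD k` also realizes the free twisted bialgebra `ℬ` (whose basis words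
  `α_{S_1}⋯α_{S_k}` are exactly the packed sequences); `Tmap u` realizes the
  convolution `1_{U_1} ∗ ⋯ ∗ 1_{U_l}` of characteristic maps as an
  endomorphism of `ℬ`; `BS k S` is the graded piece `ℬ_S` with concatenation
  `mulInto` and deconcatenation `deltaInto`.
-/

open scoped TensorProduct

noncomputable section
namespace TwistedDescent

/-- A sequence of finite subsets of `ℕ`. -/
abbrev PSeq : Type := List (Finset ℕ)

/-- A packed sequence: a finite sequence of pairwise disjoint nonempty finite
subsets of `ℕ`. -/
def Packed (w : PSeq) : Prop :=
  w.Pairwise (fun S T => Disjoint S T) ∧ ∀ S ∈ w, S ≠ ∅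

instance : DecidablePred Packed := fun w => by unfold Packed; infer_instance

/-- The type of packed sequences. -/
abbrev PackedSeq : Type := {w : PSeq // Packed w}

/-- The free twisted descent algebra `𝒯`: the free `k`-module with basis the
packed sequences.  (The same module realizes the free twisted bialgebra `ℬ`,
whose basis words are the packed sequences.) -/
abbrev TD (k : Type) [CommRing k] : Type := PackedSeq →₀ k

variable (k : Type) [CommRing k]

/-- The basis element `1_l` of `𝒯` if `l` is packed, and `0` otherwise. -/
def mk (l : PSeq) : TD k := if h : Packed l then Finsupp.single ⟨l, h⟩ 1 else 0

/-- The union `S_1 ∪ ⋯ ∪ S_k` of the members of a sequence of sets. -/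
def unionOf (w : PSeq) : Finset ℕ := w.foldr (· ∪ ·) ∅

/-- The convolution product `∗` on `𝒯`, as a bilinear map:
`1_{(S_1,…,S_n)} ∗ 1_{(T_1,…,T_m)} = 1_{(S_1,…,S_n,T_1,…,T_m)}` if all the sets
are pairwise disjoint, and `0` otherwise. -/
def convL : TD k →ₗ[k] TD k →ₗ[k] TD k :=
  Finsupp.lsum k fun w => LinearMap.toSpanSingleton k _ <|
    Finsupp.lsum k fun v => LinearMap.toSpanSingleton k _ (mk k (w.1 ++ v.1))

/-- The refinement `(S_1∩T_1,…,S_1∩T_k,…,S_n∩T_1,…,S_n∩T_k)` of two sequences,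
with all empty intersections deleted. -/
def refines (w v : PSeq) : PSeq :=
  w.flatMap fun S => (v.map fun U => S ∩ U).filter fun U => U ≠ ∅

/-- The composition product on basis elements: `0` if the underlying sets
differ, and the refinement otherwise. -/
def compB (w v : PSeq) : TD k :=
  if unionOf w = unionOf v then mk k (refines w v) else 0

/-- The composition product `∘` on `𝒯`, as a bilinear map. -/
def compL : TD k →ₗ[k] TD k →ₗ[k] TD k :=
  Finsupp.lsum k fun w => LinearMap.toSpanSingleton k _ <|
    Finsupp.lsum k fun v => LinearMap.toSpanSingleton k _ (compB k w.1 v.1)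

instance : Zero (TD k ⊗[k] TD k) :=
  (inferInstance : AddZeroClass (TD k ⊗[k] TD k)).toZero

/-- All ways of splitting each block `S_i` of `w` into an ordered pair
`(T_i, U_i)` with `S_i = T_i ⊔ U_i`. -/
def splittings (w : PSeq) : List (List (Finset ℕ × Finset ℕ)) :=
  (w.map fun S => S.powerset.toList.map fun U => (U, S \ U)).sections

/-- Delete all empty sets from a sequence. -/
def strip (l : PSeq) : PSeq := l.filter fun S => S ≠ ∅

/-- The coproduct on a basis element:
`δ(1_{(S_1,…,S_k)}) = Σ 1_{(T_1,…,T_k)^} ⊗ 1_{(U_1,…,U_k)^}` summed over all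
ways of writing `S_i = T_i ⊔ U_i`, where `^` deletes empty sets. -/
def deltaB (w : PackedSeq) : TD k ⊗[k] TD k :=
  ((splittings w.1).map fun p =>
    (mk k (strip (p.map Prod.fst)) ⊗ₜ[k] mk k (strip (p.map Prod.snd)) :
      TD k ⊗[k] TD k)).sum

/-- The coproduct `δ : 𝒯 → 𝒯 ⊗ 𝒯`. -/
def deltaL : TD k →ₗ[k] TD k ⊗[k] TD k :=
  Finsupp.lsum k fun w => LinearMap.toSpanSingleton k _ (deltaB k w)

/-- The componentwise convolution `∗₂` on `𝒯 ⊗ 𝒯`: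
`(a⊗b) ∗₂ (c⊗d) = (a∗c)⊗(b∗d)`. -/
def conv2 : TD k ⊗[k] TD k →ₗ[k] TD k ⊗[k] TD k →ₗ[k] TD k ⊗[k] TD k :=
  (TensorProduct.homTensorHomMap (RingHom.id k) _ _ _ _).comp
    (TensorProduct.map (convL k) (convL k))

/-- The componentwise composition `∘₂` on `𝒯 ⊗ 𝒯`:
`(a⊗b) ∘₂ (c⊗d) = (a∘c)⊗(b∘d)`. -/
def comp2 : TD k ⊗[k] TD k →ₗ[k] TD k ⊗[k] TD k →ₗ[k] TD k ⊗[k] TD k :=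
  (TensorProduct.homTensorHomMap (RingHom.id k) _ _ _ _).comp
    (TensorProduct.map (compL k) (compL k))

/-- The linear map `μ : 𝒯 ⊗ 𝒯 → 𝒯` induced by the convolution product. -/
def muL : TD k ⊗[k] TD k →ₗ[k] TD k := TensorProduct.lift (convL k)

/-- The submodule `𝒯_S` of `𝒯` spanned by the basis elements `1_w` with `w` an
ordered partition of `S`. -/
def TS (S : Finset ℕ) : Submodule k (TD k) :=
  Submodule.span k {x | ∃ w : PackedSeq, unionOf w.1 = S ∧ x = Finsupp.single w 1}

/-- The blocks of `w` contained in `U_1`, in their original relative order,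
then those contained in `U_2`, and so on. -/
def reorder (u w : PSeq) : PSeq := u.flatMap fun U => w.filter fun S => S ⊆ U

/-- Action of `T_u = 1_{U_1} ∗ ⋯ ∗ 1_{U_l}` on a basis word of `ℬ`: the word is
killed unless it has degree `∪ U_j` and each of its blocks is contained in some
`U_j`, in which case the blocks are regrouped along `u`. -/
def TmapB (u : PSeq) (w : PackedSeq) : TD k :=
  if unionOf w.1 = unionOf u ∧ ∀ S ∈ w.1, ∃ U ∈ u, S ⊆ U then mk k (reorder u w.1)
  else 0

/-- The endomorphism `T_u = 1_{U_1} ∗ ⋯ ∗ 1_{U_l}` of the free twisted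
bialgebra `ℬ`. -/
def Tmap (u : PSeq) : Module.End k (TD k) :=
  Finsupp.lsum k fun w => LinearMap.toSpanSingleton k _ (TmapB k u w)

/-- Ordered partitions of the finite set `S`. -/
def OrdPart (S : Finset ℕ) : Type := {w : PSeq // Packed w ∧ unionOf w = S}

/-- The graded component `ℬ_S`: the free `k`-module on the ordered partitions
of `S`. -/
abbrev BS (S : Finset ℕ) : Type := OrdPart S →₀ k

/-- Basis element of `ℬ_S`, or `0` if `l` is not an ordered partition of `S`. -/
def mkS (S : Finset ℕ) (l : PSeq) : BS k S :=
  if h : Packed l ∧ unionOf l = S then Finsupp.single ⟨l, h⟩ 1 else 0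

instance (S S' : Finset ℕ) : Zero (BS k S ⊗[k] BS k S') :=
  (inferInstance : AddZeroClass (BS k S ⊗[k] BS k S')).toZero

/-- Concatenation `m_{U,V} : ℬ_U ⊗ ℬ_V → ℬ_S` (nonzero only when `U ⊔ V = S`),
as a bilinear map. -/
def mulInto (U V S : Finset ℕ) : BS k U →ₗ[k] BS k V →ₗ[k] BS k S :=
  Finsupp.lsum k fun w => LinearMap.toSpanSingleton k _ <|
    Finsupp.lsum k fun v => LinearMap.toSpanSingleton k _ (mkS k S (w.1 ++ v.1))

/-- Deconcatenation `δ_{U,V} : ℬ_S → ℬ_U ⊗ ℬ_V` (intended for `S = U ⊔ V`):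
a basis word goes to `w_U ⊗ w_V` if each of its blocks is contained in `U` or
in `V`, where `w_U` (resp. `w_V`) is the subsequence of blocks contained in `U`
(resp. `V`), and to `0` otherwise. -/
def deltaInto (S U V : Finset ℕ) : BS k S →ₗ[k] BS k U ⊗[k] BS k V :=
  Finsupp.lsum k fun w => LinearMap.toSpanSingleton k _ <|
    if ∀ B ∈ w.1, B ⊆ U ∨ B ⊆ V then
      mkS k U (w.1.filter fun B => B ⊆ U) ⊗ₜ[k] mkS k V (w.1.filter fun B => B ⊆ V)
    else 0

/-- Graded endomorphisms of `ℬ`: families `(f_S)_S` of endomorphisms of the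
graded components `ℬ_S`. -/
abbrev GEnd : Type := (S : Finset ℕ) → Module.End k (BS k S)

/-- The convolution of graded endomorphisms:
`(f∗g)_S = Σ_{U ⊔ V = S} m_{U,V} ∘ (f_U ⊗ g_V) ∘ δ_{U,V}`. -/
def gconv (f g : GEnd k) : GEnd k := fun S =>
  ∑ U ∈ S.powerset,
    (TensorProduct.lift (mulInto k U (S \ U) S)).comp
      ((TensorProduct.map (f U) (g (S \ U))).comp (deltaInto k S U (S \ U)))

/-- The characteristic map `1_∅`: the identity on `ℬ_∅` and `0` on `ℬ_S` for
`S ≠ ∅`. -/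
def gone : GEnd k := fun S => if S = ∅ then LinearMap.id else 0

/-- `1_C(S)`: the sum of all `1_w`, `w` an ordered partition of `S` of
type `C`. -/
def oneC (C : List ℕ) (S : Finset ℕ) : TD k :=
  ∑ᶠ w : PackedSeq,
    if unionOf w.1 = S ∧ w.1.map Finset.card = C then Finsupp.single w (1 : k) else 0

/-- The composition obtained by reading a matrix of nonnegative integers row by
row and deleting all zero entries. -/
def matComp {r c : ℕ} (a : Fin r → Fin c → ℕ) : List ℕ :=
  (List.finRange r).flatMap fun i =>
    ((List.finRange c).map fun j => a i j).filter fun m => m ≠ 0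

/-- `σ` is a permutation of `[n] = {1,…,n}`: it fixes everything outside
`{1,…,n}` (and hence permutes `{1,…,n}`). -/
def IsPermOn (n : ℕ) (σ : Equiv.Perm ℕ) : Prop := ∀ m ∉ Finset.Icc 1 n, σ m = m

/-- The sequence `({σ(1)},…,{σ(n)})` of singletons, written `1_σ` in `𝒯`. -/
def permList (n : ℕ) (σ : Equiv.Perm ℕ) : PSeq :=
  (List.range n).map fun i => {σ (i + 1)}

/-- An ordered partition `(S_1,…,S_k)` is increasing if `s < s'` whenever
`s ∈ S_i`, `s' ∈ S_j` and `i < j`. -/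
def Increasing (w : PSeq) : Prop := w.Pairwise fun S T => ∀ s ∈ S, ∀ t ∈ T, s < t

/-- `σ` is a shuffle of `(S_1,…,S_k)`: the elements of each `S_i` occur in
increasing order in the sequence `(σ(1),…,σ(n))`. -/
def IsShuffle (n : ℕ) (w : PSeq) (σ : Equiv.Perm ℕ) : Prop :=
  ∀ S ∈ w, ∀ i j : ℕ, 1 ≤ i → i < j → j ≤ n → σ i ∈ S → σ j ∈ S → σ i < σ j

/-- The descent set `D(τ) = {i | 1 ≤ i ≤ n-1, τ(i) > τ(i+1)}` of a permutation
of `[n]`. -/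
def Des (n : ℕ) (τ : Equiv.Perm ℕ) : Set ℕ := {i | 1 ≤ i ∧ i < n ∧ τ (i + 1) < τ i}

/-- The right action of a permutation `σ`:
`1_{(S_1,…,S_k)}·σ = 1_{(σ⁻¹(S_1),…,σ⁻¹(S_k))}`, extended linearly. -/
def actL (σ : Equiv.Perm ℕ) : TD k →ₗ[k] TD k :=
  Finsupp.lsum k fun w =>
    LinearMap.toSpanSingleton k _ (mk k (w.1.map fun S => S.image ⇑σ⁻¹))


section Aux
variable {k : Type} [CommRing k]

lemma unionOf_cons (S : Finset ℕ) (w : PSeq) : unionOf (S :: w) = S ∪ unionOf w := rfl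

lemma unionOf_append (a b : PSeq) : unionOf (a ++ b) = unionOf a ∪ unionOf b := by
  induction a with
  | nil => simp [unionOf]
  | cons S t ih => simp [unionOf_cons, ih, Finset.union_assoc]

lemma mem_unionOf {a : ℕ} {w : PSeq} : a ∈ unionOf w ↔ ∃ S ∈ w, a ∈ S := by
  induction w with
  | nil => simp [unionOf]
  | cons S t ih => simp [unionOf_cons, ih]

lemma subset_unionOf {S : Finset ℕ} {w : PSeq} (h : S ∈ w) : S ⊆ unionOf w := by
  intro a ha; exact mem_unionOf.2 ⟨S, h, ha⟩

lemma unionOf_refines (w v : PSeq) :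
    unionOf (refines w v) = unionOf w ∩ unionOf v := by
  ext a
  simp only [Finset.mem_inter, mem_unionOf, refines, List.mem_flatMap,
    List.mem_filter, List.mem_map]
  constructor
  · rintro ⟨T, ⟨S, hS, ⟨U, hU, rfl⟩, -⟩, haT⟩
    rcases Finset.mem_inter.1 haT with ⟨h1, h2⟩
    exact ⟨⟨S, hS, h1⟩, ⟨U, hU, h2⟩⟩
  · rintro ⟨⟨S, hS, h1⟩, ⟨U, hU, h2⟩⟩
    refine ⟨S ∩ U, ⟨S, hS, ⟨U, hU, rfl⟩, ?_⟩, Finset.mem_inter.2 ⟨h1, h2⟩⟩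
    have hn : S ∩ U ≠ ∅ := Finset.ne_empty_of_mem (Finset.mem_inter.2 ⟨h1, h2⟩)
    simp [hn]

lemma disjoint_unionOf {a b : PSeq} (h : ∀ S ∈ a, ∀ T ∈ b, Disjoint S T) :
    Disjoint (unionOf a) (unionOf b) := by
  rw [Finset.disjoint_left]
  intro x hx hx'
  rcases mem_unionOf.1 hx with ⟨S, hS, hxS⟩
  rcases mem_unionOf.1 hx' with ⟨T, hT, hxT⟩
  exact Finset.disjoint_left.1 (h S hS T hT) hxS hxT

lemma refines_append_left (a b v : PSeq) :
    refines (a ++ b) v = refines a v ++ refines b v := by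
  simp [refines]

lemma filter_nil_of_inter_empty {S : Finset ℕ} {z : PSeq}
    (h : ∀ U ∈ z, S ∩ U = ∅) :
    ((z.map fun U => S ∩ U).filter fun U => U ≠ ∅) = [] := by
  rw [List.filter_eq_nil_iff]
  rintro T hT
  rcases List.mem_map.1 hT with ⟨U, hU, rfl⟩
  simp [h U hU]

lemma inter_empty_of_disjoint {S U : Finset ℕ} {w z : PSeq}
    (hd : Disjoint (unionOf w) (unionOf z)) (hS : S ∈ w) (hU : U ∈ z) :
    S ∩ U = ∅ := by
  rw [← Finset.disjoint_iff_inter_eq_empty]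
  exact Finset.disjoint_of_subset_left (subset_unionOf hS)
    (Finset.disjoint_of_subset_right (subset_unionOf hU) hd)

lemma refines_append_drop_right (w x z : PSeq)
    (hd : Disjoint (unionOf w) (unionOf z)) :
    refines w (x ++ z) = refines w x := by
  induction w with
  | nil => rfl
  | cons S t ih =>
    rw [unionOf_cons, Finset.disjoint_union_left] at hd
    have hz : ((z.map fun U => S ∩ U).filter fun U => U ≠ ∅) = [] :=
      filter_nil_of_inter_empty fun U hU => by
        rw [← Finset.disjoint_iff_inter_eq_empty]
        exact Finset.disjoint_of_subset_right (subset_unionOf hU) hd.1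
    simp only [refines, List.flatMap_cons, List.map_append, List.filter_append, hz,
      List.append_nil] at *
    rw [ih hd.2]

lemma refines_append_drop_left (w x z : PSeq)
    (hd : Disjoint (unionOf w) (unionOf x)) :
    refines w (x ++ z) = refines w z := by
  induction w with
  | nil => rfl
  | cons S t ih =>
    rw [unionOf_cons, Finset.disjoint_union_left] at hd
    have hz : ((x.map fun U => S ∩ U).filter fun U => U ≠ ∅) = [] :=
      filter_nil_of_inter_empty fun U hU => by
        rw [← Finset.disjoint_iff_inter_eq_empty]
        exact Finset.disjoint_of_subset_right (subset_unionOf hU) hd.1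
    simp only [refines, List.flatMap_cons, List.map_append, List.filter_append, hz,
      List.nil_append] at *
    rw [ih hd.2]

lemma mk_eq {l : PSeq} (h : Packed l) : mk k l = Finsupp.single ⟨l, h⟩ 1 := dif_pos h

lemma mk_eq_zero {l : PSeq} (h : ¬ Packed l) : mk k l = 0 := dif_neg h

lemma convL_single (w v : PackedSeq) :
    convL k (Finsupp.single w (1 : k)) (Finsupp.single v 1) = mk k (w.1 ++ v.1) := by
  simp [convL, Finsupp.lsum_single, LinearMap.toSpanSingleton_apply]

lemma compL_single (w v : PackedSeq) :
    compL k (Finsupp.single w (1 : k)) (Finsupp.single v 1) = compB k w.1 v.1 := by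
  simp [compL, Finsupp.lsum_single, LinearMap.toSpanSingleton_apply]

end Aux

/-- For basis elements `f = 1_w`, `g = 1_x`, `h = 1_y`,
`l = 1_z` of `𝒯`: if `(f∘g) ∗ (h∘l) ≠ 0` then
`(f∘g) ∗ (h∘l) = (f∗h) ∘ (g∗l)`. -/
theorem reciprocity_basis (k : Type) [CommRing k] (w x y z : PackedSeq)
    (hne : convL k (compL k (Finsupp.single w (1 : k)) (Finsupp.single x 1))
        (compL k (Finsupp.single y 1) (Finsupp.single z 1)) ≠ 0) :
    convL k (compL k (Finsupp.single w (1 : k)) (Finsupp.single x 1))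
        (compL k (Finsupp.single y 1) (Finsupp.single z 1))
      = compL k (convL k (Finsupp.single w 1) (Finsupp.single y 1))
          (convL k (Finsupp.single x 1) (Finsupp.single z 1)) := by
  have h1 : unionOf w.1 = unionOf x.1 := by
    by_contra h
    apply hne
    rw [compL_single, compB, if_neg h]
    simp
  have h2 : unionOf y.1 = unionOf z.1 := by
    by_contra h
    apply hne
    rw [compL_single (k := k) y z, compB, if_neg h]
    simp
  rw [compL_single, compL_single, compB, compB, if_pos h1, if_pos h2] at hne ⊢
  have hp1 : Packed (refines w.1 x.1) := by
    by_contra h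
    apply hne
    rw [mk_eq_zero h]
    simp
  have hp2 : Packed (refines y.1 z.1) := by
    by_contra h
    apply hne
    rw [mk_eq_zero (k := k) h]
    simp
  rw [mk_eq hp1, mk_eq hp2] at hne ⊢
  rw [convL_single] at hne ⊢
  have hP : Packed (refines w.1 x.1 ++ refines y.1 z.1) := by
    by_contra h
    exact hne (mk_eq_zero h)
  have hcross : ∀ S ∈ refines w.1 x.1, ∀ T ∈ refines y.1 z.1, Disjoint S T := by
    have hp := hP.1
    rw [List.pairwise_append] at hp
    exact hp.2.2
  have hdis : Disjoint (unionOf w.1) (unionOf y.1) := by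
    have hd := disjoint_unionOf hcross
    rwa [unionOf_refines, unionOf_refines, ← h1, ← h2, Finset.inter_self,
      Finset.inter_self] at hd
  have hwy : Packed (w.1 ++ y.1) := by
    constructor
    · rw [List.pairwise_append]
      exact ⟨w.2.1, y.2.1, fun S hS T hT =>
        Finset.disjoint_of_subset_left (subset_unionOf hS)
          (Finset.disjoint_of_subset_right (subset_unionOf hT) hdis)⟩
    · intro S hS
      rcases List.mem_append.1 hS with h | h
      exacts [w.2.2 S h, y.2.2 S h]
  have hdis' : Disjoint (unionOf x.1) (unionOf z.1) := by
    rw [← h1, ← h2]; exact hdis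
  have hxz : Packed (x.1 ++ z.1) := by
    constructor
    · rw [List.pairwise_append]
      exact ⟨x.2.1, z.2.1, fun S hS T hT =>
        Finset.disjoint_of_subset_left (subset_unionOf hS)
          (Finset.disjoint_of_subset_right (subset_unionOf hT) hdis')⟩
    · intro S hS
      rcases List.mem_append.1 hS with h | h
      exacts [x.2.2 S h, z.2.2 S h]
  have hu : unionOf (w.1 ++ y.1) = unionOf (x.1 ++ z.1) := by
    rw [unionOf_append, unionOf_append, h1, h2]
  rw [convL_single, convL_single, mk_eq hwy, mk_eq hxz,
    compL_single ⟨_, hwy⟩ ⟨_, hxz⟩, compB, if_pos hu]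
  show mk k (refines w.1 x.1 ++ refines y.1 z.1) = mk k (refines (w.1 ++ y.1) (x.1 ++ z.1))
  congr 1
  rw [refines_append_left,
    refines_append_drop_right w.1 x.1 z.1 (by rw [h2] at hdis; exact hdis),
    refines_append_drop_left y.1 x.1 z.1 (by rw [h1] at hdis; exact hdis.symm)]

end TwistedDescent
end
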